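/- Let k2 < a < 1/k1 with 0 < k1, k2 < 1, and suppose L > sqrt(d2/(a - k2))·π. Set δ = a - k2 - d2·π²/L² and φ(x) = sin(πx/L). Then δ > 0 and the function v̲(x) = δ·φ(x) satisfies the sub-solution inequality d2 v̲''(x) + v̲(x)(a - v̲(x) - k2·1) ≥ 0 for all x ∈ (0, L). -/

import Mathlib

/-!
`sin (π x / L)` is the principal Dirichlet eigenfunction on `(0, L)`, with eigenvalue `(π / L)²`,
so `d2 v̲'' = -d2 (π / L)² v̲` and `d2 (π / L)² = a - k2 - δ`. The left-hand side therefore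
equals `δ² φ (1 - φ)`, which is nonnegative since `0 ≤ φ ≤ 1` on `(0, L)`. The hypothesis on `L`
is exactly what makes `δ = a - k2 - d2 (π / L)²` positive.
-/

open Real Set

theorem deriv_deriv_const_mul_sin (A c : ℝ) :
    deriv (deriv fun y => A * sin (c * y)) = fun y => -(c ^ 2 * (A * sin (c * y))) := by
  have hlin (y : ℝ) : HasDerivAt (fun y => c * y) c y := by
    simpa using (hasDerivAt_id y).const_mul c
  have h1 : deriv (fun y => A * sin (c * y)) = fun y => A * (cos (c * y) * c) := by
    funext y; exact ((hlin y).sin.const_mul A).deriv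
  funext y
  rw [h1, (((hlin y).cos.mul_const c).const_mul A).deriv]
  ring

theorem mul_sq_div_sq_lt_of_sqrt_div_mul_lt {d r c L : ℝ} (hr : 0 < r) (hc : 0 < c)
    (h : sqrt (d / r) * c < L) : d * c ^ 2 / L ^ 2 < r := by
  have hL : 0 < L := (mul_nonneg (sqrt_nonneg _) hc.le).trans_lt h
  have hdr : d / r < (L / c) ^ 2 := (sqrt_lt' (div_pos hL hc)).1 ((lt_div_iff₀ hc).2 h)
  rw [div_lt_iff₀ hr, div_pow, div_mul_eq_mul_div, lt_div_iff₀ (by positivity)] at hdr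
  rw [div_lt_iff₀ (by positivity)]
  linarith

theorem sin_pi_div_mul_nonneg {L x : ℝ} (hx : x ∈ Ioo 0 L) : 0 ≤ sin (π / L * x) := by
  have hL : 0 < L := hx.1.trans hx.2
  apply sin_nonneg_of_nonneg_of_le_pi (by have := hx.1; positivity)
  rw [div_mul_eq_mul_div, div_le_iff₀ hL]
  exact mul_le_mul_of_nonneg_left hx.2.le pi_pos.le

theorem subsolution_v_barrier_general
    (L d2 a k2 : ℝ)
    (ha1 : k2 < a)
    (hLgt : L > Real.sqrt (d2 / (a - k2)) * π) :
    0 < a - k2 - d2 * π ^ 2 / L ^ 2 ∧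
    ∀ x ∈ Ioo (0 : ℝ) L,
      d2 * deriv (deriv (fun y : ℝ =>
          (a - k2 - d2 * π ^ 2 / L ^ 2) * Real.sin (π * y / L))) x
        + ((a - k2 - d2 * π ^ 2 / L ^ 2) * Real.sin (π * x / L)) *
            (a - (a - k2 - d2 * π ^ 2 / L ^ 2) * Real.sin (π * x / L) - k2 * 1) ≥ 0 := by
  refine ⟨sub_pos.2 (mul_sq_div_sq_lt_of_sqrt_div_mul_lt (sub_pos.2 ha1) pi_pos hLgt),
    fun x hx => ?_⟩
  simp only [mul_div_right_comm π, deriv_deriv_const_mul_sin]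
  set δ := a - k2 - d2 * π ^ 2 / L ^ 2 with hδ
  set s := sin (π / L * x)
  have hlogistic : d2 * -((π / L) ^ 2 * (δ * s)) + δ * s * (a - δ * s - k2 * 1)
      = δ ^ 2 * s * (1 - s) := by
    rw [hδ]; ring
  rw [hlogistic]
  exact mul_nonneg (mul_nonneg (sq_nonneg δ) (sin_pi_div_mul_nonneg hx))
    (sub_nonneg.2 (sin_le_one _))

/-- Sub-solution inequality for `v̲ = δ sin (π x / L)` in the barrier construction. -/
theorem subsolution_v_barrier
    (L d2 a k1 k2 : ℝ) (hd2 : 0 < d2)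
    (hk1 : 0 < k1) (hk1' : k1 < 1) (hk2 : 0 < k2) (hk2' : k2 < 1)
    (ha1 : k2 < a) (ha2 : a < 1 / k1)
    (hLgt : L > Real.sqrt (d2 / (a - k2)) * π) :
    0 < a - k2 - d2 * π ^ 2 / L ^ 2 ∧
    ∀ x ∈ Ioo (0 : ℝ) L,
      d2 * deriv (deriv (fun y : ℝ =>
          (a - k2 - d2 * π ^ 2 / L ^ 2) * Real.sin (π * y / L))) x
        + ((a - k2 - d2 * π ^ 2 / L ^ 2) * Real.sin (π * x / L)) *
            (a - (a - k2 - d2 * π ^ 2 / L ^ 2) * Real.sin (π * x / L) - k2 * 1) ≥ 0 :=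
  subsolution_v_barrier_general L d2 a k2 ha1 hLgt
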